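/- For every natural number M and every real number x, ((1−x)/2)^M = (1/(M+1)) · Σ_{l=0}^{M} (2l+1) · ((−1)^l · M!·(M+1)!/((M−l)!·(M+l+1)!)) · P_l(x). -/

import Mathlib

/-!
Mathlib's `Polynomial.shiftedLegendre l` has coefficients `(-1)ᵏ C(l,k) C(l+k,l)` and satisfies the
Rodrigues formula `l! · Sₗ = Dˡ (Xˡ (1-X)ˡ)`. The substitution `y = 1 - 2u` carries `(y² - 1)ˡ` to
`(-4)ˡ (u(1-u))ˡ`, so `P_l(x) = Sₗ((1-x)/2)` and the claim becomes the polynomial identity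
`u^M = (M+1)⁻¹ Σₗ (2l+1) λ(l,M) Sₗ(u)`. Comparing coefficients of `uᵏ`, the sum over `l` is a
hypergeometric sum with an explicit antidifference in `l`; it telescopes to `0` for `k < M`, and
for `k = M` only the term `l = M` survives.
-/

/-- The Legendre polynomial of degree `l`, via Rodrigues' formula
`P_l(x) = (1/(2^l·l!)) · dˡ/dxˡ (x²−1)ˡ`. -/
noncomputable def legendreP (l : ℕ) (x : ℝ) : ℝ :=
  (1 / (2 ^ l * l.factorial)) * iteratedDeriv l (fun y : ℝ => (y ^ 2 - 1) ^ l) x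

open Polynomial Finset Nat

theorem Polynomial.iteratedDeriv_aeval {R 𝕜 : Type*} [CommSemiring R] [NontriviallyNormedField 𝕜]
    [Algebra R 𝕜] (p : R[X]) (n : ℕ) :
    iteratedDeriv n (fun x : 𝕜 => aeval x p) = fun x => aeval x (derivative^[n] p) := by
  induction n with
  | zero => simp
  | succ n ih =>
    funext x
    rw [iteratedDeriv_succ, ih, Polynomial.deriv_aeval, Function.iterate_succ_apply']

theorem legendreP_eq_aeval_shiftedLegendre (l : ℕ) (x : ℝ) :
    legendreP l x = aeval ((1 - x) / 2) (shiftedLegendre l) := by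
  set q : ℤ[X] := X ^ l * (1 - X) ^ l
  have hsubst : (fun y : ℝ => (y ^ 2 - 1) ^ l)
      = fun y => (-4) ^ l * aeval (-2⁻¹ * (y - 1)) q := by
    funext y
    simp only [q, map_mul, map_pow, map_sub, aeval_X, map_one, ← mul_pow]
    ring
  rw [legendreP, hsubst, iteratedDeriv_const_mul_field,
    iteratedDeriv_comp_sub_const l (fun z => aeval (-2⁻¹ * z) q) 1,
    iteratedDeriv_comp_const_mul (contDiff_aeval q l), iteratedDeriv_aeval,
    ← factorial_mul_shiftedLegendre_eq]
  beta_reduce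
  rw [show -2⁻¹ * (x - 1) = (1 - x) / 2 by ring, map_mul, map_natCast]
  have hscale : (-4 : ℝ) ^ l * (-2⁻¹) ^ l = 2 ^ l := by rw [← mul_pow]; norm_num
  rw [← mul_assoc ((-4) ^ l), hscale]
  field_simp

theorem cast_succ_sub_mul_choose_mul_add_choose {R : Type*} [CommRing R] (m k : ℕ) :
    ((m + 1 : R) - k) * ((m + 1).choose k * (m + 1 + k).choose (m + 1))
      = (m + 1 + k) * (m.choose k * (m + k).choose m) := by
  have hsucc := congrArg (Nat.cast (R := R)) (add_one_mul_choose_eq (m + k) m)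
  rw [add_right_comm] at hsucc
  push_cast at hsucc
  rcases le_or_gt k (m + 1) with hk | hk
  · have h := congrArg (Nat.cast (R := R)) (choose_mul_succ_eq m k)
    push_cast [hk] at h
    linear_combination (-((m + 1 + k).choose (m + 1) : R)) * h - (m.choose k : R) * hsucc
  · simp [choose_eq_zero_of_lt hk, choose_eq_zero_of_lt (m.lt_succ_self.trans hk)]

section CharZeroField

variable {K : Type*} [Field K] [CharZero K]

/-- The right-hand side is Gosper's antidifference of the summand; its factor `M + 1 - m` makes it
vanish at `m = M + 1`. -/
theorem sum_range_legendre_telescope {k M : ℕ} (hkM : k ≠ M) {m : ℕ} (hm : m ≤ M + 1) :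
    ∑ l ∈ range m, (-1 : K) ^ l * (2 * l + 1) * (l.choose k * (l + k).choose l)
        / ((M - l)! * (M + l + 1)!)
      = (-1) ^ (m + 1) * (M + 1 - m) * ((m - k) * (m.choose k * (m + k).choose m))
        / ((M - k) * (M + 1 - m)! * (M + m)!) := by
  induction m with
  | zero => cases k <;> simp
  | succ m ih =>
    obtain ⟨r, rfl⟩ : ∃ r, M = m + r := ⟨M - m, by omega⟩
    rw [sum_range_succ, ih (by omega), Nat.cast_succ, cast_succ_sub_mul_choose_mul_add_choose,
      show m + r + 1 - m = r + 1 by omega, show m + r + 1 - (m + 1) = r by omega,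
      show m + r - m = r by omega, show m + r + (m + 1) = m + r + m + 1 by omega,
      factorial_succ r, factorial_succ (m + r + m)]
    have hkM' : (m + r : K) - k ≠ 0 := by
      rw [sub_ne_zero]; exact_mod_cast hkM.symm
    have hden : ((m + r + m : ℕ) + 1 : K) ≠ 0 := Nat.cast_add_one_ne_zero _
    push_cast at hden ⊢
    field_simp
    ring

def legendreExpansionCoeff (M l : ℕ) : K :=
  (-1) ^ l * M ! * (M + 1)! / ((M - l)! * (M + l + 1)!)

theorem sum_legendreExpansionCoeff_mul_coeff_shiftedLegendre {M k : ℕ} (hk : k ≤ M) :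
    ∑ l ∈ range (M + 1), (2 * l + 1) * legendreExpansionCoeff M l * ((shiftedLegendre l).coeff k : K)
      = if k = M then (M + 1 : K) else 0 := by
  simp only [coeff_shiftedLegendre, legendreExpansionCoeff]
  push_cast
  split_ifs with hkM
  · subst hkM
    rw [sum_range_succ, sum_eq_zero fun l hl => by simp [choose_eq_zero_of_lt (mem_range.1 hl)],
      zero_add]
    have hsign : (-1 : K) ^ k * (-1) ^ k = 1 := by rw [← mul_pow]; norm_num
    have hden : (2 * k + 1 : K) ≠ 0 := by exact_mod_cast succ_ne_zero (2 * k)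
    rw [Nat.sub_self, factorial_zero, choose_self, cast_add_choose, ← two_mul,
      factorial_succ (2 * k), factorial_succ k]
    have hfac : ((k ! * (2 * k)! : ℕ) : K) ≠ 0 := Nat.cast_ne_zero.2 (by positivity)
    push_cast at hfac ⊢
    field_simp
    rw [mul_assoc, mul_div_assoc, div_self hfac, mul_one, sq, hsign]
  · have htel := sum_range_legendre_telescope (K := K) hkM (le_refl (M + 1))
    simp only [Nat.cast_add, Nat.cast_one, sub_self, mul_zero, zero_mul, zero_div] at htel
    calc _ = (-1) ^ k * M ! * (M + 1)! * ∑ l ∈ range (M + 1), (-1 : K) ^ l * (2 * l + 1) *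
            (l.choose k * (l + k).choose l) / ((M - l)! * (M + l + 1)!) := by
          rw [mul_sum]
          refine sum_congr rfl fun l _ => ?_
          ring
      _ = 0 := by rw [htel, mul_zero]

theorem pow_eq_sum_legendreExpansionCoeff_mul_aeval_shiftedLegendre (M : ℕ) (u : K) :
    u ^ M = 1 / (M + 1) * ∑ l ∈ range (M + 1),
      (2 * l + 1) * legendreExpansionCoeff M l * aeval u (shiftedLegendre l) := by
  have hexpand (l : ℕ) (hl : l ∈ range (M + 1)) : aeval u (shiftedLegendre l)
      = ∑ k ∈ range (M + 1), ((shiftedLegendre l).coeff k : K) * u ^ k := by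
    rw [aeval_eq_sum_range' (by rw [natDegree_shiftedLegendre]; exact mem_range.1 hl)]
    simp only [zsmul_eq_mul]
  symm
  calc _ = 1 / (M + 1) * ∑ k ∈ range (M + 1), (∑ l ∈ range (M + 1),
        (2 * l + 1) * legendreExpansionCoeff M l * ((shiftedLegendre l).coeff k : K)) * u ^ k := by
        simp only [sum_mul]
        rw [sum_comm]
        refine congrArg _ (sum_congr rfl fun l hl => ?_)
        rw [hexpand l hl, mul_sum]
        simp only [mul_assoc]
    _ = 1 / (M + 1) * ∑ k ∈ range (M + 1), (if k = M then (M + 1 : K) else 0) * u ^ k := by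
        refine congrArg _ (sum_congr rfl fun k hk => ?_)
        rw [sum_legendreExpansionCoeff_mul_coeff_shiftedLegendre (mem_range_succ_iff.1 hk)]
    _ = u ^ M := by
        simp only [ite_mul, zero_mul, sum_ite_eq', mem_range, lt_add_one, if_true]
        field_simp

end CharZeroField

/-- The Legendre expansion
`((1−x)/2)^M = (1/(M+1)) Σ_{l=0}^{M} (2l+1) λ(l,M) P_l(x)` with
`λ(l,M) = (−1)^l M!(M+1)!/((M−l)!(M+l+1)!)`. -/
theorem legendre_expansion (M : ℕ) (x : ℝ) :
    ((1 - x) / 2) ^ M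
      = (1 / (M + 1)) * ∑ l ∈ Finset.range (M + 1),
          (2 * l + 1) *
            ((-1 : ℝ) ^ l * M.factorial * (M + 1).factorial /
              ((M - l).factorial * (M + l + 1).factorial)) *
            legendreP l x := by
  simp only [legendreP_eq_aeval_shiftedLegendre]
  exact pow_eq_sum_legendreExpansionCoeff_mul_aeval_shiftedLegendre M ((1 - x) / 2)
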